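/- arXiv:0808.0859 — 4 statements merged into one kernel-verified Lean document; each statement's English description precedes it below -/
import Mathlib

section
/- Let ψ be a unit vector and ω a rank-2 density matrix with ψ in the range of ω, ω ≠ |ψ⟩⟨ψ|. Then there exists a real a > 1 such that σ = (1−a)|ψ⟩⟨ψ| + aω is a pure density matrix (rank-1 projection) distinct from |ψ⟩⟨ψ|. -/
open Matrix
open scoped ComplexOrder

/-!
Write ψ = ωφ and c = ⟨φ, ωφ⟩. By Cauchy–Schwarz for the semi-inner product ⟨x, ωy⟩, the
rank-one deflation ω − c⁻¹ |ψ⟩⟨ψ| is positive semidefinite; it annihilates ker ω and φ, so its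
rank is below rank ω = 2. Cauchy–Schwarz also gives c ⟨ψ, ωψ⟩ ≥ |⟨φ, ωψ⟩|² = 1, while
⟨ψ, ωψ⟩ < tr ω = 1 because a rank-2 matrix is not supported on the line through ψ; hence c > 1.
For a = c / (c − 1) > 1, the matrix (1 − a) |ψ⟩⟨ψ| + a ω is a times the deflation, so it is a pure
state, and it is not |ψ⟩⟨ψ| because it annihilates φ while |ψ⟩⟨ψ| φ = c ψ ≠ 0.
-/

/-- |ψ⟩⟨ψ| as a matrix. -/
noncomputable def proj {m : Type*} (ψ : m → ℂ) : Matrix m m ℂ :=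
  Matrix.vecMulVec ψ (star ψ)

namespace Matrix

variable {m n K : Type*} [Fintype n]

theorem rank_eq_zero_iff [Field K] {A : Matrix m n K} : A.rank = 0 ↔ A = 0 := by
  classical
  rw [rank, Submodule.finrank_eq_zero, LinearMap.range_eq_bot, ← toLin'_apply',
    LinearEquiv.map_eq_zero_iff]

theorem rank_lt_rank_of_ker_lt [Field K] {A B : Matrix m n K}
    (h : LinearMap.ker A.mulVecLin < LinearMap.ker B.mulVecLin) : B.rank < A.rank := by
  have hA := LinearMap.finrank_range_add_finrank_ker A.mulVecLin
  have hB := LinearMap.finrank_range_add_finrank_ker B.mulVecLin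
  have := Submodule.finrank_lt_finrank_of_lt h
  unfold rank
  omega

theorem trace_one_sub_smul_add_smul [Fintype m] {A B : Matrix m m ℂ} (hA : A.trace = 1)
    (hB : B.trace = 1) (a : ℝ) : ((1 - a) • A + a • B).trace = 1 := by
  rw [trace_add, trace_smul, trace_smul, hA, hB, ← add_smul, sub_add_cancel, one_smul]

end Matrix

section proj

variable {n : Type*} [Fintype n]

theorem proj_mulVec (ψ x : n → ℂ) : proj ψ *ᵥ x = (star ψ ⬝ᵥ x) • ψ := by
  rw [proj, vecMulVec_mulVec, op_smul_eq_smul]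

theorem posSemidef_proj (ψ : n → ℂ) : (proj ψ).PosSemidef :=
  posSemidef_vecMulVec_self_star ψ

theorem trace_proj (ψ : n → ℂ) : (proj ψ).trace = star ψ ⬝ᵥ ψ := by
  rw [proj, trace_vecMulVec, dotProduct_comm]

theorem trace_mul_proj (A : Matrix n n ℂ) (ψ : n → ℂ) :
    (A * proj ψ).trace = star ψ ⬝ᵥ A *ᵥ ψ := by
  rw [proj, mul_vecMulVec, trace_vecMulVec, dotProduct_comm]

theorem rank_proj_le_one (ψ : n → ℂ) : (proj ψ).rank ≤ 1 :=
  rank_vecMulVec_le _ _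

theorem proj_mul_self {ψ : n → ℂ} (hψ : star ψ ⬝ᵥ ψ = 1) : proj ψ * proj ψ = proj ψ := by
  rw [proj, vecMulVec_mul_vecMulVec, hψ, one_smul]

theorem star_dotProduct_proj_mulVec (ψ x : n → ℂ) :
    star x ⬝ᵥ proj ψ *ᵥ x = Complex.normSq (star ψ ⬝ᵥ x) := by
  rw [proj_mulVec, dotProduct_smul, star_dotProduct x ψ, smul_eq_mul, Complex.star_def,
    Complex.mul_conj]

end proj

namespace Matrix

variable {n : Type*} [Fintype n] {ω : Matrix n n ℂ}

theorem IsHermitian.star_mulVec_dotProduct (hω : ω.IsHermitian) (x y : n → ℂ) :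
    star (ω *ᵥ x) ⬝ᵥ y = star x ⬝ᵥ ω *ᵥ y := by
  rw [star_mulVec, hω.eq, dotProduct_mulVec]

theorem IsHermitian.ofReal_re_dotProduct_mulVec (hω : ω.IsHermitian) (x : n → ℂ) :
    ((star x ⬝ᵥ ω *ᵥ x).re : ℂ) = star x ⬝ᵥ ω *ᵥ x :=
  Complex.ext rfl (by simpa using (hω.im_star_dotProduct_mulVec_self x).symm)

theorem IsHermitian.proj_mulVec_mulVec_self (hω : ω.IsHermitian) (φ : n → ℂ) :
    proj (ω *ᵥ φ) *ᵥ φ = ((star φ ⬝ᵥ ω *ᵥ φ).re : ℂ) • ω *ᵥ φ := by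
  rw [proj_mulVec, hω.star_mulVec_dotProduct, hω.ofReal_re_dotProduct_mulVec]

theorem PosSemidef.normSq_dotProduct_mulVec_le (hω : ω.PosSemidef) (x y : n → ℂ) :
    Complex.normSq (star x ⬝ᵥ ω *ᵥ y) ≤ (star x ⬝ᵥ ω *ᵥ x).re * (star y ⬝ᵥ ω *ᵥ y).re := by
  let := ω.toSeminormedAddCommGroup hω
  let := ω.toInnerProductSpace hω
  have h := inner_mul_inner_self_le (𝕜 := ℂ) x y
  have e : ∀ u v : n → ℂ, inner ℂ u v = star u ⬝ᵥ ω *ᵥ v := fun u v => dotProduct_comm _ _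
  rw [← inner_conj_symm y x, RCLike.norm_conj, e, e, e] at h
  simpa [Complex.normSq_eq_norm_sq, sq] using h

theorem PosSemidef.re_dotProduct_mulVec_lt_re_trace (hω : ω.PosSemidef) {ψ : n → ℂ}
    (hψ : star ψ ⬝ᵥ ψ = 1) (hrank : 1 < ω.rank) :
    (star ψ ⬝ᵥ ω *ᵥ ψ).re < ω.trace.re := by
  classical
  set Q := 1 - proj ψ with hQdef
  have hQ : Qᴴ = Q := by simp [Q, (posSemidef_proj ψ).1.eq]
  have hQQ : Q * Q = Q := by simp [Q, sub_mul, mul_sub, proj_mul_self hψ]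
  have htrace : (Q * ω * Q).trace = ω.trace - star ψ ⬝ᵥ ω *ᵥ ψ := by
    rw [trace_mul_cycle, hQQ, hQdef, sub_mul, one_mul, trace_sub, trace_mul_comm, trace_mul_proj]
  have hpsd : (Q * ω * Q).PosSemidef := by
    simpa only [hQ] using hω.conjTranspose_mul_mul_same Q
  -- If equality held, `QωQ = 0` would force `ω = ω |ψ⟩⟨ψ|`, of rank at most one.
  by_contra! hge
  have hzero : Q * ω * Q = 0 := by
    refine hpsd.trace_eq_zero_iff.mp (le_antisymm ?_ hpsd.trace_nonneg)
    have him := (Complex.le_def.mp hpsd.trace_nonneg).2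
    rw [htrace] at him ⊢
    exact Complex.le_def.mpr ⟨by simpa using hge, him.symm⟩
  have hωQ : ω * Q = 0 := by
    refine ext_iff_mulVec.mpr fun v => ?_
    rw [← mulVec_mulVec, zero_mulVec, ← hω.dotProduct_mulVec_zero_iff, star_mulVec, hQ, ← dotProduct_mulVec, mulVec_mulVec, mulVec_mulVec, hzero,
      zero_mulVec, dotProduct_zero]
  have hωP : ω = ω * proj ψ := by
    rwa [hQdef, mul_sub, mul_one, sub_eq_zero] at hωQ
  have := (rank_mul_le_right ω (proj ψ)).trans (rank_proj_le_one ψ)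
  rw [← hωP] at this
  omega

theorem PosSemidef.one_lt_re_dotProduct_mulVec (hω : ω.PosSemidef) (htr : ω.trace = 1)
    (hrank : 1 < ω.rank) {φ : n → ℂ} (hψ : star (ω *ᵥ φ) ⬝ᵥ ω *ᵥ φ = 1) :
    1 < (star φ ⬝ᵥ ω *ᵥ φ).re := by
  have hs := hω.re_dotProduct_mulVec_lt_re_trace hψ hrank
  rw [htr, Complex.one_re] at hs
  have hcs := hω.normSq_dotProduct_mulVec_le φ (ω *ᵥ φ)
  rw [← hω.1.star_mulVec_dotProduct, hψ, Complex.normSq_one] at hcs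
  have hc := hω.re_dotProduct_nonneg φ
  have hs₀ := hω.re_dotProduct_nonneg (ω *ᵥ φ)
  rw [RCLike.re_to_complex] at hc hs₀
  nlinarith

noncomputable def deflate (ω : Matrix n n ℂ) (φ : n → ℂ) : Matrix n n ℂ :=
  ω - (star φ ⬝ᵥ ω *ᵥ φ).re⁻¹ • proj (ω *ᵥ φ)

theorem PosSemidef.deflate (hω : ω.PosSemidef) (φ : n → ℂ) : (ω.deflate φ).PosSemidef := by
  unfold Matrix.deflate
  set c := (star φ ⬝ᵥ ω *ᵥ φ).re
  have hc : 0 ≤ c := hω.re_dotProduct_nonneg φ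
  refine .of_dotProduct_mulVec_nonneg (hω.1.sub ((posSemidef_proj _).smul (inv_nonneg.mpr hc)).1)
    fun x => ?_
  have hcs : Complex.normSq (star φ ⬝ᵥ ω *ᵥ x) ≤ c * (star x ⬝ᵥ ω *ᵥ x).re :=
    hω.normSq_dotProduct_mulVec_le φ x
  rw [sub_mulVec, dotProduct_sub, smul_mulVec, dotProduct_smul,
    star_dotProduct_proj_mulVec, hω.1.star_mulVec_dotProduct, ← hω.1.ofReal_re_dotProduct_mulVec,
    Complex.real_smul, ← Complex.ofReal_mul, ← Complex.ofReal_sub, Complex.zero_le_real, sub_nonneg]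
  rcases hc.eq_or_lt with hc | hc
  · simpa [← hc] using hω.re_dotProduct_nonneg x
  · exact (inv_mul_le_iff₀ hc).mpr hcs

theorem IsHermitian.deflate_mulVec_self (hω : ω.IsHermitian) {φ : n → ℂ}
    (hc : (star φ ⬝ᵥ ω *ᵥ φ).re ≠ 0) : ω.deflate φ *ᵥ φ = 0 := by
  rw [Matrix.deflate, sub_mulVec, smul_mulVec, hω.proj_mulVec_mulVec_self, Complex.coe_smul,
    smul_smul, inv_mul_cancel₀ hc, one_smul, sub_self]

theorem IsHermitian.ker_le_ker_deflate (hω : ω.IsHermitian) (φ : n → ℂ) :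
    LinearMap.ker ω.mulVecLin ≤ LinearMap.ker (ω.deflate φ).mulVecLin := by
  intro x hx
  rw [LinearMap.mem_ker, mulVecLin_apply] at hx ⊢
  rw [Matrix.deflate, sub_mulVec, smul_mulVec, proj_mulVec, hω.star_mulVec_dotProduct, hx,
    dotProduct_zero, zero_smul, smul_zero, sub_zero]

theorem smul_proj_mulVec_add_smul_eq_smul_deflate {φ : n → ℂ} {a : ℝ}
    (hc : (star φ ⬝ᵥ ω *ᵥ φ).re ≠ 0) (ha : (1 - a) * (star φ ⬝ᵥ ω *ᵥ φ).re + a = 0) :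
    (1 - a) • proj (ω *ᵥ φ) + a • ω = (a : ℂ) • ω.deflate φ := by
  have h1a : 1 - a = -(a * (star φ ⬝ᵥ ω *ᵥ φ).re⁻¹) := by
    field_simp
    linear_combination ha
  rw [Complex.coe_smul, deflate, smul_sub, smul_smul, h1a, neg_smul]
  abel

theorem IsHermitian.rank_deflate_lt (hω : ω.IsHermitian) {φ : n → ℂ}
    (hc : (star φ ⬝ᵥ ω *ᵥ φ).re ≠ 0) : (ω.deflate φ).rank < ω.rank := by
  refine rank_lt_rank_of_ker_lt (SetLike.lt_iff_le_and_exists.mpr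
    ⟨hω.ker_le_ker_deflate φ, φ, hω.deflate_mulVec_self hc, fun hφ => hc ?_⟩)
  rw [LinearMap.mem_ker, mulVecLin_apply] at hφ
  rw [hφ, dotProduct_zero, Complex.zero_re]

end Matrix

theorem stmt4_general {d : ℕ} (ψ : Fin d → ℂ) (hψ : star ψ ⬝ᵥ ψ = 1)
    (ω : Matrix (Fin d) (Fin d) ℂ) (hω : ω.PosSemidef) (hωtr : ω.trace = 1)
    (hrank : ω.rank = 2)
    (hrange : ψ ∈ LinearMap.range ω.mulVecLin) :
    ∃ a : ℝ, 1 < a ∧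
      ((1 - a) • proj ψ + a • ω).PosSemidef ∧
      ((1 - a) • proj ψ + a • ω).trace = 1 ∧
      ((1 - a) • proj ψ + a • ω).rank = 1 ∧
      (1 - a) • proj ψ + a • ω ≠ proj ψ := by
  obtain ⟨φ, rfl⟩ := hrange
  rw [mulVecLin_apply] at hψ ⊢
  set c := (star φ ⬝ᵥ ω *ᵥ φ).re
  have hc : 1 < c := hω.one_lt_re_dotProduct_mulVec hωtr (by omega) hψ
  set a := c / (c - 1)
  have ha : 1 < a := (one_lt_div (by linarith)).mpr (by linarith)
  have hσ : (1 - a) • proj (ω *ᵥ φ) + a • ω = (a : ℂ) • ω.deflate φ := by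
    refine smul_proj_mulVec_add_smul_eq_smul_deflate (by positivity) ?_
    have : c - 1 ≠ 0 := (sub_pos.mpr hc).ne'
    simp only [a]
    field_simp
    ring
  have htr := trace_one_sub_smul_add_smul ((trace_proj _).trans hψ) hωtr a
  refine ⟨a, ha, ?_, htr, ?_, fun h => ?_⟩
  · rw [hσ]
    exact (hω.deflate φ).smul (Complex.zero_le_real.mpr (by positivity))
  · have hpos : ((1 - a) • proj (ω *ᵥ φ) + a • ω).rank ≠ 0 :=
      fun h0 => by simp [Matrix.rank_eq_zero_iff.mp h0] at htr
    have hlt := hω.1.rank_deflate_lt (φ := φ) (by positivity)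
    rw [hσ, rank_smul_of_mem_nonZeroDivisors _ (mem_nonZeroDivisors_of_ne_zero (by positivity))]
      at hpos ⊢
    omega
  · have hσφ := congrArg (· *ᵥ φ) h
    simp only [hσ, smul_mulVec, hω.1.deflate_mulVec_self (by positivity), smul_zero,
      hω.1.proj_mulVec_mulVec_self] at hσφ
    rcases smul_eq_zero.mp hσφ.symm with hc0 | hψ0
    · exact (Complex.ofReal_ne_zero.mpr (by positivity)) hc0
    · simp [hψ0] at hψ

/-- If ψ is a unit vector lying in the range of a rank-2 density matrix
ω ≠ |ψ⟩⟨ψ|, then for some real a > 1, σ = (1−a)|ψ⟩⟨ψ| + aω is a pure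
density matrix (positive semidefinite, trace 1, rank 1) distinct from |ψ⟩⟨ψ|. -/
theorem stmt4 {d : ℕ} (ψ : Fin d → ℂ) (hψ : star ψ ⬝ᵥ ψ = 1)
    (ω : Matrix (Fin d) (Fin d) ℂ) (hω : ω.PosSemidef) (hωtr : ω.trace = 1)
    (hrank : ω.rank = 2)
    (hrange : ψ ∈ LinearMap.range ω.mulVecLin)
    (hne : ω ≠ proj ψ) :
    ∃ a : ℝ, 1 < a ∧
      ((1 - a) • proj ψ + a • ω).PosSemidef ∧
      ((1 - a) • proj ψ + a • ω).trace = 1 ∧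
      ((1 - a) • proj ψ + a • ω).rank = 1 ∧
      (1 - a) • proj ψ + a • ω ≠ proj ψ :=
  stmt4_general ψ hψ ω hω hωtr hrank hrange
end

section
/- Lemma (adjacentzeros): Under the main constraint (c_I e^j_{i_j i_j} + c_{I_j} e^j_{i_jᶜ i_j} = c_I e^k_{i_k i_k} + c_{I_k} e^k_{i_kᶜ i_k} for all multi-indices I and qubits j, k), if c_I = c_{I_j} = 0 for some I and j, and not all coefficients c are zero, then there exists a qubit k and a bit i such that e^k_{iᶜ i} = 0. -/
open scoped BigOperators

/-- Complement the bit in slot `j` of the multi-index `I`. -/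
def bflip {n : ℕ} (I : Fin n → Fin 2) (j : Fin n) : Fin n → Fin 2 :=
  Function.update I j (1 - I j)

/-- The main constraint on coefficients c_I and environment vectors e^j_{ir}:
c_I e^j_{i_j i_j} + c_{I_j} e^j_{i_jᶜ i_j} = c_I e^k_{i_k i_k} + c_{I_k} e^k_{i_kᶜ i_k}
for every multi-index I and all qubits j, k. -/
def MainConstraint {n : ℕ} {V : Type*} [AddCommGroup V] [Module ℂ V]
    (c : (Fin n → Fin 2) → ℂ) (e : Fin n → Fin 2 → Fin 2 → V) : Prop :=
  ∀ (I : Fin n → Fin 2) (j k : Fin n),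
    c I • e j (I j) (I j) + c (bflip I j) • e j (1 - I j) (I j)
      = c I • e k (I k) (I k) + c (bflip I k) • e k (1 - I k) (I k)

/-- Lemma (adjacentzeros): under the main constraint, if c_I = c_{I_j} = 0
for some I, j and the coefficients are not all zero, then e^k_{iᶜ i} = 0 for
some qubit k and bit i. -/
theorem stmt10 {n : ℕ} {V : Type*} [AddCommGroup V] [Module ℂ V]
    (c : (Fin n → Fin 2) → ℂ) (e : Fin n → Fin 2 → Fin 2 → V)
    (hmc : MainConstraint c e)
    (hc : c ≠ 0)
    (I : Fin n → Fin 2) (j : Fin n)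
    (hI : c I = 0) (hIj : c (bflip I j) = 0) :
    ∃ (k : Fin n) (i : Fin 2), e k (1 - i) i = 0 := by
  by_contra h
  push_neg at h
  have hsub2 : ∀ a : Fin 2, 1 - (1 - a) = a := by decide
  have hne2 : ∀ a b : Fin 2, a ≠ b → 1 - a = b := by decide
  have hflip : ∀ (J : Fin n → Fin 2) (m : Fin n), bflip (bflip J m) m = J := by
    intro J m
    funext x
    by_cases hx : x = m
    · subst hx
      simp [bflip, Function.update_self, hsub2]
    · simp [bflip, Function.update_of_ne hx]
  have A : ∀ (J : Fin n → Fin 2), c J = 0 → (∃ m, c (bflip J m) = 0) →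
      ∀ k, c (bflip J k) = 0 := by
    rintro J hJ ⟨m, hm⟩ k
    have hmk := hmc J m k
    rw [hJ, hm] at hmk
    simp only [zero_smul, add_zero, zero_add] at hmk
    rcases smul_eq_zero.mp hmk.symm with h1 | h2
    · exact h1
    · exact absurd h2 (h k (J k))
  have Q : ∀ d (J : Fin n → Fin 2),
      (Finset.univ.filter (fun m => J m ≠ I m)).card ≤ d →
      c J = 0 ∧ ∀ k, c (bflip J k) = 0 := by
    intro d
    induction d with
    | zero =>
      intro J hJ
      have hJI : J = I := by
        funext x
        by_contra hx
        have hmem : x ∈ Finset.univ.filter (fun m => J m ≠ I m) := by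
          simp [hx]
        have := Finset.card_pos.mpr ⟨x, hmem⟩
        omega
      subst hJI
      exact ⟨hI, A J hI ⟨j, hIj⟩⟩
    | succ d ih =>
      intro J hJ
      by_cases hle : (Finset.univ.filter (fun m => J m ≠ I m)).card ≤ d
      · exact ih J hle
      · have hpos : 0 < (Finset.univ.filter (fun m => J m ≠ I m)).card := by omega
        obtain ⟨m, hm⟩ := Finset.card_pos.mp hpos
        have hmne : J m ≠ I m := by
          simpa using hm
        set J' := bflip J m with hJ'def
        have hsub : (Finset.univ.filter (fun m' => J' m' ≠ I m')) ⊆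
            (Finset.univ.filter (fun m' => J m' ≠ I m')).erase m := by
          intro x hx
          simp only [Finset.mem_filter, Finset.mem_univ, true_and] at hx
          by_cases hxm : x = m
          · subst hxm
            exfalso
            apply hx
            simp [hJ'def, bflip, Function.update_self, hne2 _ _ hmne]
          · rw [Finset.mem_erase]
            refine ⟨hxm, ?_⟩
            simp only [Finset.mem_filter, Finset.mem_univ, true_and]
            simpa [hJ'def, bflip, Function.update_of_ne hxm] using hx
        have hcard : (Finset.univ.filter (fun m' => J' m' ≠ I m')).card ≤ d := by
          have h1 := Finset.card_le_card hsub
          have h2 := Finset.card_erase_of_mem hm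
          omega
        obtain ⟨hJ'0, hnb⟩ := ih J' hcard
        have hJ0 : c J = 0 := by
          have := hnb m
          rwa [hJ'def, hflip J m] at this
        exact ⟨hJ0, A J hJ0 ⟨m, hJ'0⟩⟩
  apply hc
  funext J
  have hcard : (Finset.univ.filter (fun m => J m ≠ I m)).card ≤ n := by
    have := Finset.card_filter_le (Finset.univ : Finset (Fin n))
      (fun m => J m ≠ I m)
    simpa using this
  exact (Q n J hcard).1
end

section
/- Lemma (mainlemma): Under the main constraint, if there exist multi-indices I, I' differing in slot j and agreeing in slot k, with c_I c_{I'} ≠ 0 and c_I c_{I'} − c_{I'_j} c_{I_j} ≠ 0, then the four vectors e^j_{00}, e^j_{01}, e^j_{10}, e^j_{11} span a subspace of dimension at most 2. -/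
/-!
Fix the slot `k` and let `W` be the span of `e^k_{bb}, e^k_{b̄b}` with `b = I k`. Instantiating the
main constraint at `I` and at `I'_j` (both have slot `j` equal to `a = I j` and slot `k` equal to `b`)
puts two independent combinations of `e^j_{aa}, e^j_{āa}` into `W`: the system has determinant
`c_I c_{I'} − c_{I'_j} c_{I_j} ≠ 0`, so both vectors lie in `W`. Doing the same for the pair `I_j, I'_j`
gives the other column `e^j_{·ā}`, so all four vectors lie in the two-dimensional `W`.
-/

open scoped BigOperators

theorem Fin.two_eq_or_eq_one_sub (a x : Fin 2) : x = a ∨ x = 1 - a := by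
  revert a x; decide

theorem Fin.two_eq_one_sub_of_ne {a x : Fin 2} (h : x ≠ a) : x = 1 - a :=
  (Fin.two_eq_or_eq_one_sub a x).resolve_left h

theorem Submodule.mem_and_mem_of_det_ne_zero {K V : Type*} [Field K] [AddCommGroup V]
    [Module K V] {W : Submodule K V} {x y : V} {a b c d : K} (hdet : a * d - b * c ≠ 0)
    (h₁ : a • x + b • y ∈ W) (h₂ : c • x + d • y ∈ W) : x ∈ W ∧ y ∈ W := by
  constructor
  · rw [← W.smul_mem_iff hdet]
    convert W.sub_mem (W.smul_mem d h₁) (W.smul_mem b h₂) using 1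
    module
  · rw [← W.smul_mem_iff hdet]
    convert W.sub_mem (W.smul_mem a h₂) (W.smul_mem c h₁) using 1
    module

theorem finrank_span_pair_le (K : Type*) {V : Type*} [DivisionRing K] [AddCommGroup V]
    [Module K V] (u v : V) : Module.finrank K (Submodule.span K ({u, v} : Set V)) ≤ 2 := by
  classical
  calc _ ≤ ({u, v} : Set V).toFinset.card := finrank_span_le_card _
    _ ≤ 2 := by simpa using Finset.card_le_two

section bflip

variable {n : ℕ}

@[simp] theorem bflip_apply_self (I : Fin n → Fin 2) (j : Fin n) : bflip I j j = 1 - I j :=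
  Function.update_self _ _ _

theorem bflip_apply_of_ne (I : Fin n → Fin 2) {i j : Fin n} (h : i ≠ j) : bflip I j i = I i :=
  Function.update_of_ne h _ _

@[simp] theorem bflip_bflip (I : Fin n → Fin 2) (j : Fin n) : bflip (bflip I j) j = I := by
  ext1 i
  rcases eq_or_ne i j with rfl | h
  · simp
  · rw [bflip_apply_of_ne _ h, bflip_apply_of_ne _ h]

end bflip

namespace MainConstraint

variable {n : ℕ} {V : Type*} [AddCommGroup V] [Module ℂ V]
    {c : (Fin n → Fin 2) → ℂ} {e : Fin n → Fin 2 → Fin 2 → V}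

theorem mem_span (hmc : MainConstraint c e) (I : Fin n → Fin 2) (j k : Fin n) :
    c I • e j (I j) (I j) + c (bflip I j) • e j (1 - I j) (I j) ∈
      Submodule.span ℂ ({e k (I k) (I k), e k (1 - I k) (I k)} : Set V) := by
  rw [hmc I j k]
  exact add_mem (Submodule.smul_mem _ _ (Submodule.subset_span (by simp)))
    (Submodule.smul_mem _ _ (Submodule.subset_span (by simp)))

theorem mem_span_of_det_ne_zero (hmc : MainConstraint c e)
    {I I' : Fin n → Fin 2} {j k : Fin n} (hdiff : I' j ≠ I j) (hagree : I' k = I k)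
    (hdet : c I * c I' - c (bflip I' j) * c (bflip I j) ≠ 0) (x : Fin 2) :
    e j x (I j) ∈ Submodule.span ℂ ({e k (I k) (I k), e k (1 - I k) (I k)} : Set V) := by
  have hjk : k ≠ j := fun h => hdiff (h ▸ hagree)
  have h₂ := hmc.mem_span (bflip I' j) j k
  rw [bflip_bflip, bflip_apply_self, Fin.two_eq_one_sub_of_ne hdiff, sub_sub_cancel,
    bflip_apply_of_ne _ hjk, hagree] at h₂
  obtain ⟨hdiag, hoff⟩ := Submodule.mem_and_mem_of_det_ne_zero
    (by rwa [mul_comm (c (bflip I j))]) (hmc.mem_span I j k) h₂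
  rcases Fin.two_eq_or_eq_one_sub (I j) x with rfl | rfl
  exacts [hdiag, hoff]

end MainConstraint

theorem stmt11_general {n : ℕ} {V : Type*} [AddCommGroup V] [Module ℂ V]
    (c : (Fin n → Fin 2) → ℂ) (e : Fin n → Fin 2 → Fin 2 → V)
    (hmc : MainConstraint c e)
    (I I' : Fin n → Fin 2) (j k : Fin n)
    (hdiff : I' j ≠ I j) (hagree : I' k = I k)
    (h2 : c I * c I' - c (bflip I' j) * c (bflip I j) ≠ 0) :
    Module.finrank ℂ
      (Submodule.span ℂ ({e j 0 0, e j 0 1, e j 1 0, e j 1 1} : Set V)) ≤ 2 := by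
  have hjk : k ≠ j := fun h => hdiff (h ▸ hagree)
  have hcol := hmc.mem_span_of_det_ne_zero hdiff hagree h2
  have hcol' := hmc.mem_span_of_det_ne_zero (I := bflip I j) (I' := bflip I' j) (j := j) (k := k)
    (by simpa using hdiff) (by rw [bflip_apply_of_ne _ hjk, bflip_apply_of_ne _ hjk, hagree])
    (by rw [bflip_bflip, bflip_bflip]; contrapose! h2; linear_combination -h2)
  rw [bflip_apply_of_ne _ hjk, bflip_apply_self] at hcol'
  set W := Submodule.span ℂ ({e k (I k) (I k), e k (1 - I k) (I k)} : Set V)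
  have : FiniteDimensional ℂ W := FiniteDimensional.span_of_finite ℂ (Set.toFinite _)
  have hall : ∀ x y, e j x y ∈ W := by
    intro x y
    rcases Fin.two_eq_or_eq_one_sub (I j) y with rfl | rfl
    exacts [hcol x, hcol' x]
  refine (Submodule.finrank_mono (t := W) ?_).trans (finrank_span_pair_le ℂ _ _)
  rw [Submodule.span_le]
  rintro _ (rfl | rfl | rfl | rfl) <;> exact hall _ _

/-- Lemma (mainlemma): under the main constraint, if I and I' differ in slot j
and agree in slot k, with c_I c_{I'} ≠ 0 and c_I c_{I'} − c_{I'_j} c_{I_j} ≠ 0,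
then {e^j_{00}, e^j_{01}, e^j_{10}, e^j_{11}} spans at most two dimensions. -/
theorem stmt11 {n : ℕ} {V : Type*} [AddCommGroup V] [Module ℂ V]
    (c : (Fin n → Fin 2) → ℂ) (e : Fin n → Fin 2 → Fin 2 → V)
    (hmc : MainConstraint c e)
    (I I' : Fin n → Fin 2) (j k : Fin n)
    (hdiff : I' j ≠ I j) (hagree : I' k = I k)
    (h1 : c I * c I' ≠ 0)
    (h2 : c I * c I' - c (bflip I' j) * c (bflip I j) ≠ 0) :
    Module.finrank ℂ
      (Submodule.span ℂ ({e j 0 0, e j 0 1, e j 1 0, e j 1 1} : Set V)) ≤ 2 :=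
  stmt11_general c e hmc I I' j k hdiff hagree h2
end

section
/- If coefficients c : {0,1}ⁿ → ℂ (n ≥ 3) are all nonzero and satisfy c_I c_{I'} = c_{I'_j} c_{I_j} for every pair of multi-indices I, I' that differ in some slot j and agree in some other slot, then the corresponding n-qubit state Σ_I c_I |I⟩ is a tensor product of a single-qubit state and an (n−1)-qubit state. -/
/-!
Fix a slot `j` and consider the ratio `R I = c (I with 1 at j) / c (I with 0 at j)`. The
hypothesis, applied to the pair (I with 1 at j, J with 0 at j), says exactly that `R I = R J`
whenever `I` and `J` agree in some slot other than `j`. Since `n ≥ 3`, changing any single slot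
of `I` leaves some slot other than `j` untouched, so `R` is invariant under single-slot changes
and hence constant, say `R ≡ r`. Then `c I = a (I j) * c (I with 0 at j)` with `a = ![1, r]`.
-/

open scoped BigOperators

open Function

theorem Function.apply_eq_of_forall_update_eq {ι β : Type*} [Finite ι] [DecidableEq ι]
    {α : ι → Type*} {f : (∀ i, α i) → β} (hf : ∀ x i v, f (update x i v) = f x)
    (x y : ∀ i, α i) : f x = f y := by
  have := Fintype.ofFinite ι
  have piecewise_eq : ∀ s : Finset ι, f (s.piecewise y x) = f x := by
    intro s
    induction s using Finset.induction_on with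
    | empty => rw [Finset.piecewise_empty]
    | insert i s _ ih => rw [Finset.piecewise_insert, hf, ih]
  rw [← piecewise_eq Finset.univ, Finset.piecewise_univ]

section Qubits

variable {n : ℕ} (c : (Fin n → Fin 2) → ℂ)

def FlipRelation : Prop :=
  ∀ (I I' : Fin n → Fin 2) (j : Fin n), I j ≠ I' j → (∃ k, k ≠ j ∧ I k = I' k) →
    c I * c I' = c (bflip I' j) * c (bflip I j)

noncomputable def slotRatio (j : Fin n) (I : Fin n → Fin 2) : ℂ :=
  c (update I j 1) / c (update I j 0)

variable {c}

theorem mul_update_eq_of_agree (hyp : FlipRelation c) {j l : Fin n} (hlj : l ≠ j)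
    {I J : Fin n → Fin 2} (hIJ : I l = J l) :
    c (update I j 1) * c (update J j 0) = c (update J j 1) * c (update I j 0) := by
  have h := hyp (update I j 1) (update J j 0) j (by simp)
    ⟨l, hlj, by simp [update_of_ne hlj, hIJ]⟩
  simpa [bflip] using h

theorem slotRatio_eq_of_agree (hnz : ∀ I, c I ≠ 0) (hyp : FlipRelation c) {j l : Fin n}
    (hlj : l ≠ j) {I J : Fin n → Fin 2} (hIJ : I l = J l) :
    slotRatio c j I = slotRatio c j J := by
  rw [slotRatio, slotRatio, div_eq_div_iff (hnz _) (hnz _)]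
  exact mul_update_eq_of_agree hyp hlj hIJ

theorem slotRatio_update (hn : 3 ≤ n) (hnz : ∀ I, c I ≠ 0) (hyp : FlipRelation c)
    (j : Fin n) (I : Fin n → Fin 2) (k : Fin n) (v : Fin 2) :
    slotRatio c j (update I k v) = slotRatio c j I := by
  obtain ⟨l, hlj, hlk⟩ := ENat.exists_ne_ne_of_three_le (by simpa using hn) j k
  exact slotRatio_eq_of_agree hnz hyp hlj (update_of_ne hlk v I)

theorem eq_mul_update_zero_of_slotRatio_eq (hnz : ∀ I, c I ≠ 0) {j : Fin n} {r : ℂ}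
    (hr : ∀ I, slotRatio c j I = r) (I : Fin n → Fin 2) :
    c I = ![1, r] (I j) * c (update I j 0) := by
  match hI : I j with
  | 0 =>
    have h : update I j 0 = I := by rw [← hI, update_eq_self]
    simp [h]
  | 1 =>
    have h := hr I
    rw [slotRatio, ← hI, update_eq_self, div_eq_iff (hnz _)] at h
    simpa using h

end Qubits

/-- If all coefficients c_I (n ≥ 3) are nonzero and every pair of multi-indices
I, I' differing in some slot j and agreeing in some other slot satisfies
c_I c_{I'} = c_{I'_j} c_{I_j}, then the state Σ_I c_I |I⟩ is a product of a
single-qubit state (in some qubit j) and an (n−1)-qubit state. -/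
theorem stmt14 {n : ℕ} (hn : 3 ≤ n) (c : (Fin n → Fin 2) → ℂ)
    (hnz : ∀ I, c I ≠ 0)
    (hyp : ∀ (I I' : Fin n → Fin 2) (j : Fin n), I j ≠ I' j →
      (∃ k, k ≠ j ∧ I k = I' k) →
      c I * c I' = c (bflip I' j) * c (bflip I j)) :
    ∃ (j : Fin n) (a : Fin 2 → ℂ) (b : ({k : Fin n // k ≠ j} → Fin 2) → ℂ),
      ∀ I : Fin n → Fin 2, c I = a (I j) * b (fun k => I k.1) := by
  let j : Fin n := ⟨0, by omega⟩
  have hr : ∀ I, slotRatio c j I = slotRatio c j 0 :=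
    fun I => apply_eq_of_forall_update_eq (slotRatio_update hn hnz hyp j) I 0
  refine ⟨j, ![1, slotRatio c j 0],
    fun g => c (fun k => if h : k = j then 0 else g ⟨k, h⟩), fun I => ?_⟩
  have extend_eq : (fun k => if k = j then 0 else I k) = update I j 0 := by
    funext k
    simp [update_apply]
  simpa [extend_eq] using eq_mul_update_zero_of_slotRatio_eq hnz hr I
end
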